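/- arXiv:1107.2874 — 2 statements merged into one kernel-verified Lean document; each statement's English description precedes it below -/
import Mathlib

section
/- For α ∈ (0,1], λ > 0, t > 0, and k ≥ 0, the k-th coefficient in the power series expansion in u of exp(-λ^α t (1-u)^α) equals ((-1)^k/k!) ∑_{r=0}^∞ ((-λ^α t)^r / r!) · Γ(αr+1)/Γ(αr+1-k). -/
/-!
Expand `exp (x (1 - u)^α)` as `∑ xʳ/r! (1 - u)^(αr)` and each `(1 - u)^(αr)` by the binomial
series `∑ choose(αr, k) (-u)ᵏ`; since `αr ≥ 0`, `k! choose(αr, k) = Γ(αr + 1)/Γ(αr + 1 - k)`.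
The double series is absolutely summable: `|choose(s, k)| ≤ |choose(-|s|, k)|`, so the row `r` is
dominated by `|x|ʳ/r! (1 - |u|)^(-|α| r)`, whose sum is `exp (|x| (1 - |u|)^(-|α|))`.
Hence the two summations may be exchanged.
-/

open Finset Nat

theorem Ring.choose_eq_descPochhammer_eval_div {K : Type*} [Field K] [CharZero K] (s : K) (k : ℕ) :
    Ring.choose s k = (descPochhammer K k).eval s / k ! := by
  rw [Ring.choose_eq_smul, smul_eq_mul, inv_mul_eq_div, ← Polynomial.aeval_eq_smeval,
    ← Polynomial.eval_map_algebraMap, descPochhammer_map]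

namespace Real

theorem hasSum_choose_mul_pow (a : ℝ) {y : ℝ} (hy : |y| < 1) :
    HasSum (fun k ↦ Ring.choose a k * y ^ k) ((1 + y) ^ a) := by
  have := one_add_rpow_hasFPowerSeriesOnBall_zero (a := a) |>.hasSum (y := y)
    (by simpa [← ofReal_norm] using hy)
  simpa [binomialSeries, mul_comm] using this

theorem abs_choose_le_choose_neg_abs_mul_neg_one_pow (s : ℝ) (k : ℕ) :
    |Ring.choose s k| ≤ Ring.choose (-|s|) k * (-1) ^ k := by
  rw [Ring.choose_eq_descPochhammer_eval_div, Ring.choose_eq_descPochhammer_eval_div,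
    descPochhammer_eval_eq_prod_range, descPochhammer_eval_eq_prod_range, abs_div, Nat.abs_cast,
    abs_prod, div_mul_eq_mul_div, show (-1 : ℝ) ^ k = ∏ _ ∈ range k, (-1 : ℝ) by simp,
    ← prod_mul_distrib]
  gcongr with i
  calc |s - i| ≤ |s| + i := by simpa using abs_sub s i
    _ = (-|s| - i) * -1 := by ring

theorem abs_choose_mul_pow_le (s y : ℝ) (k : ℕ) :
    |Ring.choose s k * y ^ k| ≤ Ring.choose (-|s|) k * (-|y|) ^ k := by
  rw [abs_mul, abs_pow, neg_pow, ← mul_assoc]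
  gcongr
  exact abs_choose_le_choose_neg_abs_mul_neg_one_pow s k

theorem hasSum_choose_neg_abs_mul_pow (s : ℝ) {y : ℝ} (hy : |y| < 1) :
    HasSum (fun k ↦ Ring.choose (-|s|) k * (-|y|) ^ k) ((1 - |y|) ^ (-|s|)) := by
  simpa [sub_eq_add_neg] using hasSum_choose_mul_pow (-|s|) (y := -|y|) (by simpa using hy)

theorem summable_abs_choose_mul_pow (s : ℝ) {y : ℝ} (hy : |y| < 1) :
    Summable fun k ↦ |Ring.choose s k * y ^ k| :=
  (hasSum_choose_neg_abs_mul_pow s hy).summable.of_nonneg_of_le (fun _ ↦ abs_nonneg _)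
    (abs_choose_mul_pow_le s y)

theorem tsum_abs_choose_mul_pow_le (s : ℝ) {y : ℝ} (hy : |y| < 1) :
    ∑' k, |Ring.choose s k * y ^ k| ≤ (1 - |y|) ^ (-|s|) :=
  (hasSum_choose_neg_abs_mul_pow s hy).tsum_eq ▸
    (summable_abs_choose_mul_pow s hy).tsum_le_tsum (abs_choose_mul_pow_le s y)
      (hasSum_choose_neg_abs_mul_pow s hy).summable

theorem summable_pow_div_factorial_mul_choose_mul_pow (x α : ℝ) {y : ℝ} (hy : |y| < 1) :
    Summable fun p : ℕ × ℕ ↦ x ^ p.1 / p.1 ! * (Ring.choose (α * p.1) p.2 * y ^ p.2) := by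
  rw [← summable_abs_iff]
  refine (summable_prod_of_nonneg fun _ ↦ abs_nonneg _).mpr ⟨fun r ↦ ?_, ?_⟩
  · simp_rw [abs_mul (x ^ r / r !)]
    exact (summable_abs_choose_mul_pow _ hy).mul_left _
  · refine (summable_pow_div_factorial (|x| * (1 - |y|) ^ (-|α|))).of_nonneg_of_le
      (fun _ ↦ tsum_nonneg fun _ ↦ abs_nonneg _) fun r ↦ ?_
    have h1y : 0 ≤ 1 - |y| := by linarith
    calc ∑' k, |x ^ r / r ! * (Ring.choose (α * r) k * y ^ k)|
        = |x| ^ r / r ! * ∑' k, |Ring.choose (α * r) k * y ^ k| := by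
          simp_rw [abs_mul (x ^ r / r !), tsum_mul_left, abs_div, abs_pow, Nat.abs_cast]
      _ ≤ |x| ^ r / r ! * (1 - |y|) ^ (-|α * r|) := by
          gcongr; exact tsum_abs_choose_mul_pow_le _ hy
      _ = (|x| * (1 - |y|) ^ (-|α|)) ^ r / r ! := by
          rw [abs_mul, Nat.abs_cast, ← neg_mul, rpow_mul h1y, rpow_natCast, mul_pow]
          ring

theorem Gamma_add_one_eq_descPochhammer_mul (s : ℝ) (k : ℕ) (hs : ∀ i < k, s ≠ i) :
    Gamma (s + 1) = (descPochhammer ℝ k).eval s * Gamma (s + 1 - k) := by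
  induction k with
  | zero => simp
  | succ k ih =>
    rw [ih fun i hi ↦ hs i (by omega), descPochhammer_succ_eval, Nat.cast_succ,
      show s + 1 - k = s - k + 1 by ring, Gamma_add_one (sub_ne_zero.mpr (hs k k.lt_succ_self))]
    ring_nf

theorem Gamma_add_one_div_Gamma_sub_natCast (s : ℝ) (hs : ∀ m : ℕ, s + 1 ≠ -m) (k : ℕ) :
    Gamma (s + 1) / Gamma (s + 1 - k) = (descPochhammer ℝ k).eval s := by
  by_cases! h : ∃ i < k, s = i
  -- `s + 1 - k` is then a pole, where Mathlib's `Gamma` is `0`; the quotient is `0` as well.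
  · obtain ⟨i, hik, rfl⟩ := h
    have : Gamma (i + 1 - k) = 0 := by
      rw [Gamma_eq_zero_iff]
      exact ⟨k - (i + 1), by push_cast [Nat.cast_sub hik]; ring⟩
    rw [this, div_zero, descPochhammer_eval_coe_nat_of_lt hik]
  · have hΓ := Gamma_add_one_eq_descPochhammer_mul s k h
    refine div_eq_of_eq_mul (fun h0 ↦ Gamma_ne_zero hs ?_) hΓ
    rw [hΓ, h0, mul_zero]

end Real

theorem space_fractional_poisson_coefficients_general (l α t : ℝ)
    (hα : α ∈ Set.Ioc (0:ℝ) 1) (u : ℝ) (hu : |u| < 1) :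
    Real.exp (-l ^ α * t * (1 - u) ^ α) =
      ∑' k : ℕ, ((-1 : ℝ) ^ k / (k.factorial : ℝ) *
        ∑' r : ℕ, (-l ^ α * t) ^ r / (r.factorial : ℝ) *
          (Real.Gamma (α * r + 1) / Real.Gamma (α * r + 1 - k))) * u ^ k := by
  set x := -l ^ α * t
  have hu' : |-u| < 1 := by rwa [abs_neg]
  have hΓ (r : ℕ) : ∀ m : ℕ, α * r + 1 ≠ -m := fun m ↦ by
    have : 0 ≤ α * r := by have := hα.1; positivity
    linarith [m.cast_nonneg (α := ℝ)]
  calc Real.exp (x * (1 - u) ^ α)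
      = ∑' r : ℕ, x ^ r / r ! * (1 - u) ^ (α * r) := by
        rw [Real.exp_eq_exp_ℝ, NormedSpace.exp_eq_tsum_div]
        refine tsum_congr fun r ↦ ?_
        rw [Real.rpow_mul (by linarith [(abs_lt.mp hu).2]), Real.rpow_natCast, mul_pow,
          div_mul_eq_mul_div]
    _ = ∑' r : ℕ, ∑' k : ℕ, x ^ r / r ! * (Ring.choose (α * r) k * (-u) ^ k) := by
        congr with r
        rw [tsum_mul_left, (Real.hasSum_choose_mul_pow _ hu').tsum_eq, sub_eq_add_neg]
    _ = ∑' k : ℕ, ∑' r : ℕ, x ^ r / r ! * (Ring.choose (α * r) k * (-u) ^ k) :=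
        (Real.summable_pow_div_factorial_mul_choose_mul_pow x α hu').tsum_comm.symm
    _ = _ := by
        congr with k
        rw [← tsum_mul_left, ← tsum_mul_right]
        congr with r
        rw [Real.Gamma_add_one_div_Gamma_sub_natCast _ (hΓ r),
          Ring.choose_eq_descPochhammer_eval_div, neg_pow]
        field_simp

theorem space_fractional_poisson_coefficients (l α t : ℝ) (hl : 0 < l)
    (hα : α ∈ Set.Ioc (0:ℝ) 1) (ht : 0 < t) (u : ℝ) (hu : |u| < 1) :
    Real.exp (-l ^ α * t * (1 - u) ^ α) =
      ∑' k : ℕ, ((-1 : ℝ) ^ k / (k.factorial : ℝ) *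
        ∑' r : ℕ, (-l ^ α * t) ^ r / (r.factorial : ℝ) *
          (Real.Gamma (α * r + 1) / Real.Gamma (α * r + 1 - k))) * u ^ k :=
  space_fractional_poisson_coefficients_general l α t hα u hu
end

section
/- For ν ∈ (0,1], α ∈ (0,1], λ > 0, t > 0, and u ∈ (0,1): E_ν(-λ^α t^ν (1-u)^α) = ∑_{k=0}^∞ [1-(1-u)^α]^k · ∑_{r=k}^∞ (-1)^{r-k} C(r,k) (λ^α t^ν)^r / Γ(νr+1). -/
open Real

/-- The one-parameter Mittag-Leffler function. -/
noncomputable def mittagLeffler (ν x : ℝ) : ℝ := ∑' r : ℕ, x ^ r / Real.Gamma (ν * r + 1)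

open Filter

lemma ml_summable {ν : ℝ} (hν : 0 < ν) {y : ℝ} (hy : 0 ≤ y) :
    Summable (fun r : ℕ => y ^ r / Real.Gamma (ν * r + 1)) := by
  set K : ℝ := (y + 1) ^ (1 / ν) with hKdef
  have hK1 : 1 ≤ K := by
    calc (1:ℝ) = (1:ℝ) ^ (1/ν) := (Real.one_rpow _).symm
      _ ≤ K := Real.rpow_le_rpow one_pos.le (by linarith) (by positivity)
  have hK0 : 0 < K := lt_of_lt_of_le one_pos hK1
  have hKν : K ^ ν = y + 1 := by
    rw [hKdef, ← Real.rpow_mul (by positivity), one_div_mul_cancel hν.ne', Real.rpow_one]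
  have hΓpos : ∀ r : ℕ, 0 < Real.Gamma (ν * r + 1) := fun r =>
    Real.Gamma_pos_of_pos (by positivity)
  -- eventually n! ≥ K^n
  have h1 : ∀ᶠ n : ℕ in atTop, K ^ n ≤ (n.factorial : ℝ) := by
    have := (Real.summable_pow_div_factorial K).tendsto_atTop_zero
    filter_upwards [this.eventually (gt_mem_nhds one_pos)] with n hn
    have hfac : (0:ℝ) < n.factorial := by positivity
    calc K ^ n = (K ^ n / n.factorial) * n.factorial := by field_simp
      _ ≤ 1 * (n.factorial : ℝ) := by nlinarith [pow_pos hK0 n]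
      _ = (n.factorial : ℝ) := one_mul _
  have h2 : Tendsto (fun r : ℕ => ⌊ν * (r:ℝ)⌋₊) atTop atTop := by
    apply tendsto_nat_floor_atTop.comp
    exact (tendsto_natCast_atTop_atTop (R := ℝ)).const_mul_atTop hν
  have h3 : ∀ᶠ r : ℕ in atTop,
      y ^ r / Real.Gamma (ν * r + 1) ≤ K * (y / (y + 1)) ^ r := by
    filter_upwards [h2.eventually h1, h2.eventually_ge_atTop 1] with r hr hr1
    set n : ℕ := ⌊ν * (r:ℝ)⌋₊ with hn
    have hnle : (n:ℝ) ≤ ν * r := Nat.floor_le (by positivity)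
    have hge : (y + 1) ^ r / K ≤ Real.Gamma (ν * r + 1) := by
      have hmono := Real.Gamma_strictMonoOn_Ici.monotoneOn
        (a := ((n:ℝ) + 1)) (b := (ν * r + 1))
        (by have : (1:ℝ) ≤ n := Nat.one_le_cast.mpr hr1
            simp only [Set.mem_Ici]; linarith)
        (by have : (1:ℝ) ≤ n := Nat.one_le_cast.mpr hr1
            simp only [Set.mem_Ici]; linarith) (by have : (1:ℝ) ≤ n := Nat.one_le_cast.mpr hr1; linarith)
      rw [Real.Gamma_nat_eq_factorial] at hmono
      have h4 : K ^ (ν * r - 1) ≤ K ^ (n : ℝ) := by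
        apply Real.rpow_le_rpow_of_exponent_le hK1
        have := Nat.sub_one_lt_floor (ν * (r:ℝ))
        linarith
      have h5 : K ^ ((n:ℝ)) = K ^ n := Real.rpow_natCast K n
      have h6 : K ^ (ν * r - 1) = (y + 1) ^ r / K := by
        rw [Real.rpow_sub hK0, Real.rpow_one, Real.rpow_mul hK0.le, hKν,
          Real.rpow_natCast]
      calc (y+1)^r / K = K ^ (ν * r - 1) := h6.symm
        _ ≤ K ^ (n:ℝ) := h4
        _ = K ^ n := h5
        _ ≤ (n.factorial : ℝ) := hr
        _ ≤ Real.Gamma (ν * r + 1) := hmono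
    have hy1 : (0:ℝ) < (y+1)^r := by positivity
    rw [div_le_iff₀ (hΓpos r)]
    calc y ^ r = (K * (y / (y+1))^r) * ((y+1)^r / K) := by
          rw [div_pow]; field_simp
      _ ≤ (K * (y / (y+1))^r) * Real.Gamma (ν * r + 1) := by
          apply mul_le_mul_of_nonneg_left hge; positivity
  obtain ⟨N, hN⟩ := eventually_atTop.mp h3
  rw [← summable_nat_add_iff N]
  apply Summable.of_nonneg_of_le (fun r => by positivity)
    (fun r => hN (r + N) (Nat.le_add_left _ _))
  exact ((summable_geometric_of_lt_one (by positivity)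
    (div_lt_one (by positivity) |>.mpr (by linarith))).mul_left K).comp_injective
    (add_left_injective N)

noncomputable def Faux (v a ν : ℝ) (k r : ℕ) : ℝ :=
  v ^ k * (if k ≤ r then
    (-1:ℝ) ^ (r - k) * (r.choose k : ℝ) * a ^ r / Real.Gamma (ν * r + 1) else 0)


set_option maxHeartbeats 800000 in
theorem pgf_min_uniform_expansion (l α ν t : ℝ) (hl : 0 < l)
    (hα : α ∈ Set.Ioc (0:ℝ) 1) (hν : ν ∈ Set.Ioc (0:ℝ) 1) (ht : 0 < t)
    (u : ℝ) (hu : u ∈ Set.Ioo (0:ℝ) 1) :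
    mittagLeffler ν (-l ^ α * t ^ ν * (1 - u) ^ α) =
      ∑' k : ℕ, (1 - (1 - u) ^ α) ^ k *
        ∑' r : ℕ, (if k ≤ r then
          (-1 : ℝ) ^ (r - k) * (r.choose k : ℝ) * (l ^ α * t ^ ν) ^ r / Real.Gamma (ν * r + 1)
        else 0) := by
  obtain ⟨hα0, hα1⟩ := hα
  obtain ⟨hν0, hν1⟩ := hν
  obtain ⟨hu0, hu1⟩ := hu
  set a : ℝ := l ^ α * t ^ ν with ha
  set w : ℝ := (1 - u) ^ α with hwdef
  have hw0 : 0 < w := Real.rpow_pos_of_pos (by linarith) α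
  have hw1 : w < 1 := Real.rpow_lt_one (by linarith) (by linarith) hα0
  set v : ℝ := 1 - w with hv
  have hv0 : 0 < v := by simp only [hv]; linarith
  have ha0 : 0 < a := mul_pos (Real.rpow_pos_of_pos hl α) (Real.rpow_pos_of_pos ht ν)
  have hΓ : ∀ r : ℕ, 0 < Real.Gamma (ν * r + 1) := fun r =>
    Real.Gamma_pos_of_pos (by positivity)
  clear_value a w v
  have habs : ∀ k r : ℕ, |Faux v a ν k r| =
      (if k ≤ r then (r.choose k : ℝ) * (v ^ k * a ^ r) / Real.Gamma (ν * r + 1) else 0) := by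
    intro k r
    by_cases h : k ≤ r
    · simp only [Faux, if_pos h]
      rw [abs_mul, abs_of_nonneg (by positivity : (0:ℝ) ≤ v ^ k), abs_div, abs_mul, abs_mul,
        abs_pow, abs_neg, abs_one, one_pow, one_mul,
        abs_of_nonneg (by positivity : (0:ℝ) ≤ (r.choose k : ℝ)),
        abs_of_nonneg (by positivity : (0:ℝ) ≤ a ^ r), abs_of_nonneg (hΓ r).le]
      ring
    · simp [Faux, if_neg h]
  have hG : Summable (fun p : ℕ × ℕ => |Faux v a ν p.2 p.1|) := by
    rw [summable_prod_of_nonneg (fun p => abs_nonneg _)]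
    constructor
    · intro r
      apply summable_of_ne_finset_zero (s := Finset.range (r + 1))
      intro k hk
      simp only [Finset.mem_range, not_lt] at hk
      rw [habs, if_neg (by omega)]
    · have heq : ∀ r : ℕ, (∑' k, |Faux v a ν k r|) =
          ((1 + v) * a) ^ r / Real.Gamma (ν * r + 1) := by
        intro r
        rw [tsum_eq_sum (s := Finset.range (r + 1)) (f := fun k => |Faux v a ν k r|)
          (fun k hk => by
            simp only [Finset.mem_range, not_lt] at hk
            show |Faux v a ν k r| = 0
            rw [habs, if_neg (by omega)])]
        calc (∑ k ∈ Finset.range (r + 1), |Faux v a ν k r|)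
            = ∑ k ∈ Finset.range (r + 1),
                (v ^ k * 1 ^ (r - k) * (r.choose k : ℝ)) * (a ^ r / Real.Gamma (ν * r + 1)) := by
              refine Finset.sum_congr rfl fun k hk => ?_
              simp only [Finset.mem_range] at hk
              rw [habs, if_pos (by omega)]; ring
          _ = (v + 1) ^ r * (a ^ r / Real.Gamma (ν * r + 1)) := by
              rw [← Finset.sum_mul, ← add_pow]
          _ = ((1 + v) * a) ^ r / Real.Gamma (ν * r + 1) := by rw [mul_pow]; ring
      simp only [heq]
      exact ml_summable hν0 (mul_nonneg (by linarith) ha0.le)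
  have hFsum : Summable (Function.uncurry (Faux v a ν)) := by
    have h1 : Summable (fun p : ℕ × ℕ => Faux v a ν p.2 p.1) := summable_abs_iff.mp hG
    exact ((Equiv.prodComm ℕ ℕ).summable_iff).mpr h1
  have hrow : ∀ r : ℕ, (∑' k, Faux v a ν k r) =
      (-l ^ α * t ^ ν * w) ^ r / Real.Gamma (ν * r + 1) := by
    intro r
    rw [tsum_eq_sum (s := Finset.range (r + 1)) (f := fun k => Faux v a ν k r)
      (fun k hk => by
        simp only [Finset.mem_range, not_lt] at hk
        show Faux v a ν k r = 0
        simp [Faux, if_neg (by omega : ¬ k ≤ r)])]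
    have hb : (v + (-1:ℝ)) ^ r =
        ∑ k ∈ Finset.range (r + 1), v ^ k * (-1:ℝ) ^ (r - k) * (r.choose k : ℝ) :=
      add_pow v (-1) r
    calc (∑ k ∈ Finset.range (r + 1), Faux v a ν k r)
        = ∑ k ∈ Finset.range (r + 1),
            (v ^ k * (-1:ℝ) ^ (r - k) * (r.choose k : ℝ)) * (a ^ r / Real.Gamma (ν * r + 1)) := by
          refine Finset.sum_congr rfl fun k hk => ?_
          simp only [Finset.mem_range] at hk
          simp only [Faux, if_pos (by omega : k ≤ r)]; ring
      _ = (v + (-1)) ^ r * (a ^ r / Real.Gamma (ν * r + 1)) := by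
          rw [← Finset.sum_mul, ← hb]
      _ = (-l ^ α * t ^ ν * w) ^ r / Real.Gamma (ν * r + 1) := by
          have hx : -l ^ α * t ^ ν * w = (v + (-1)) * a := by
            rw [hv, ha]; ring
          rw [hx, mul_pow]; ring
  calc mittagLeffler ν (-l ^ α * t ^ ν * w)
      = ∑' r : ℕ, (-l ^ α * t ^ ν * w) ^ r / Real.Gamma (ν * r + 1) := rfl
    _ = ∑' r : ℕ, ∑' k : ℕ, Faux v a ν k r := tsum_congr fun r => (hrow r).symm
    _ = ∑' k : ℕ, ∑' r : ℕ, Faux v a ν k r := Summable.tsum_comm hFsum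
    _ = ∑' k : ℕ, v ^ k * ∑' r : ℕ, (if k ≤ r then
          (-1 : ℝ) ^ (r - k) * (r.choose k : ℝ) * a ^ r / Real.Gamma (ν * r + 1)
        else 0) := tsum_congr fun k => tsum_mul_left
end
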